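/- arXiv:1809.01205 — 6 statements merged into one kernel-verified Lean document; each statement's English description precedes it below -/
import Mathlib

section
/- Assume the standing hypotheses (σ-finite $(X,\mathscr A,\mu)$, $\mu_w\circ\phi^{-1}\ll\mu$). The weighted composition operator $C_{\phi,w}$ is densely defined in $L^2(\mu)$ if and only if $\mathsf{h}_{\phi,w}<\infty$ a.e. $[\mu]$. -/
/-!
Pushing `μ_w` forward along `φ` gives `h_{φ,w} · μ`, so `‖w · (f ∘ φ)‖₂² = ∫ |f|² h_{φ,w} dμ`
and the domain of `C_{φ,w}` is the weighted space `{f ∈ L²(μ) : ∫ |f|² h_{φ,w} dμ < ∞}`.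
If `h_{φ,w} < ∞` a.e., the truncations `f · χ_{h_{φ,w} ≤ n}` lie in the domain and converge
to `f` by dominated convergence. Otherwise σ-finiteness yields a set `S` of finite positive
measure on which `h_{φ,w} = ∞`; every `f` in the domain vanishes a.e. on `S`, so `χ_S` keeps
distance at least `‖χ_S‖ > 0` from the domain.
-/

open MeasureTheory ENNReal NNReal Filter Topology

variable {X : Type*} [MeasurableSpace X]

/-- The measure `μ_w` with density `|w|²` with respect to `μ`. -/
noncomputable def wcMeasure (μ : Measure X) (w : X → ℂ) : Measure X :=
  μ.withDensity fun x => (‖w x‖₊ : ℝ≥0∞) ^ 2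

/-- The Radon–Nikodym derivative `h_{φ,w} = d(μ_w ∘ φ⁻¹)/dμ`. -/
noncomputable def wcDeriv (μ : Measure X) (w : X → ℂ) (φ : X → X) : X → ℝ≥0∞ :=
  ((wcMeasure μ w).map φ).rnDeriv μ

/-- The modified weight `w_α = w · (h_{φ,w}/(h_{φ,w}∘φ))^{α/2}` (interpreted a.e.). -/
noncomputable def wcAlpha (μ : Measure X) (w : X → ℂ) (φ : X → X) (α : ℝ) : X → ℂ :=
  fun x => w x * (((wcDeriv μ w φ x / wcDeriv μ w φ (φ x)) ^ (α / 2)).toReal : ℂ)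

/-- `E` is (a version of) the conditional expectation of the nonnegative function `f`
with respect to the σ-algebra `φ⁻¹(𝒜)` and the measure `ν`. -/
def IsCondExp (φ : X → X) (ν : Measure X) (f E : X → ℝ≥0∞) : Prop :=
  Measurable[MeasurableSpace.comap φ inferInstance] E ∧
    ∀ s : Set X, MeasurableSet s → ∫⁻ x in φ ⁻¹' s, E x ∂ν = ∫⁻ x in φ ⁻¹' s, f x ∂ν

/-- `g = E ∘ φ⁻¹`: the measurable function with `g ∘ φ = E` a.e. `[ν]`,
vanishing a.e. `[μ]` on the set where `h = 0`. -/
def IsQuot (φ : X → X) (μ ν : Measure X) (h : X → ℝ≥0∞) (E g : X → ℝ≥0∞) : Prop :=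
  Measurable g ∧ (∀ᵐ x ∂ν, g (φ x) = E x) ∧ (∀ᵐ x ∂μ, h x = 0 → g x = 0)

/-- `E` is (a version of) the conditional expectation of the complex function `f`
with respect to the σ-algebra `φ⁻¹(𝒜)` and the measure `ν`. -/
def IsCondExpC (φ : X → X) (ν : Measure X) (f E : X → ℂ) : Prop :=
  Measurable[MeasurableSpace.comap φ inferInstance] E ∧
    ∀ s : Set X, MeasurableSet s → ν (φ ⁻¹' s) < ⊤ →
      ∫ x in φ ⁻¹' s, E x ∂ν = ∫ x in φ ⁻¹' s, f x ∂ν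

/-- `f_w = χ_{{w ≠ 0}} f / w`. -/
noncomputable def fw (w f : X → ℂ) : X → ℂ := fun x => if w x = 0 then 0 else f x / w x

namespace MeasureTheory

variable {α E : Type*} {m : MeasurableSpace α} {μ : Measure α} [NormedAddCommGroup E]
  {p : ℝ≥0∞}

lemma Lp.norm_le_dist_of_ae_eq_zero_on [Fact (1 ≤ p)] {s : Set α} {f g : Lp E p μ}
    (hf : ∀ᵐ x ∂μ, x ∈ s → f x = 0) (hg : ∀ᵐ x ∂μ, x ∉ s → g x = 0) : ‖g‖ ≤ dist g f := by
  have hg_eq : (g : α → E) =ᵐ[μ] s.indicator (⇑g - ⇑f) := by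
    filter_upwards [hf, hg] with x hfx hgx
    by_cases hx : x ∈ s <;> simp [hx, hfx, hgx]
  rw [Lp.norm_def, Lp.dist_def, eLpNorm_congr_ae hg_eq]
  exact ENNReal.toReal_mono ((Lp.memLp g).sub (Lp.memLp f)).eLpNorm_ne_top
    (eLpNorm_indicator_le _)

lemma ae_eq_zero_of_lintegral_rpow_enorm_mul_ne_top {f : α → E} {h : α → ℝ≥0∞} {q : ℝ}
    (hq : 0 < q) (hf : AEStronglyMeasurable f μ) (hh : AEMeasurable h μ)
    (hfin : ∫⁻ x, ‖f x‖ₑ ^ q * h x ∂μ ≠ ∞) : ∀ᵐ x ∂μ, h x = ∞ → f x = 0 := by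
  filter_upwards [ae_lt_top' ((hf.enorm.pow_const q).mul hh) hfin] with x hx hhx
  by_contra hfx
  rw [Pi.mul_apply, hhx, ENNReal.mul_top (by simpa [hq.le, hq.not_ge] using hfx)] at hx
  exact lt_irrefl _ hx

lemma tendsto_eLpNorm_indicator_sub (hp : p ≠ ∞) {f : α → E} (hf : MemLp f p μ)
    {s : ℕ → Set α} (hs : ∀ n, MeasurableSet (s n)) (h : ∀ᵐ x ∂μ, ∀ᶠ n in atTop, x ∈ s n) :
    Tendsto (fun n => eLpNorm ((s n).indicator f - f) p μ) atTop (𝓝 0) := by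
  rcases eq_or_ne p 0 with rfl | hp0
  · simp
  have hq : 0 < p.toReal := toReal_pos hp0 hp
  suffices Tendsto (fun n => ∫⁻ x, ‖(s n).indicator f x - f x‖ₑ ^ p.toReal ∂μ) atTop (𝓝 0) by
    simp only [eLpNorm_eq_lintegral_rpow_enorm_toReal hp0 hp]
    convert! continuous_rpow_const.continuousAt.tendsto.comp this
    simp [zero_rpow_of_pos (inv_pos.mpr hq)]
  have h_bound n : (fun x => ‖(s n).indicator f x - f x‖ₑ ^ p.toReal) ≤ᵐ[μ]
      fun x => ‖f x‖ₑ ^ p.toReal := .of_forall fun x => by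
    by_cases hx : x ∈ s n <;> simp [hx, hq]
  have h_lim : ∀ᵐ x ∂μ,
      Tendsto (fun n => ‖(s n).indicator f x - f x‖ₑ ^ p.toReal) atTop (𝓝 0) := by
    filter_upwards [h] with x hx
    exact tendsto_const_nhds.congr' (hx.mono fun n hn => by simp [hn, hq])
  simpa using tendsto_lintegral_of_dominated_convergence' _
    (fun n => ((hf.1.indicator (hs n)).sub hf.1).enorm.pow_const _) h_bound
    (lintegral_rpow_enorm_lt_top_of_eLpNorm_lt_top hp0 hp hf.2).ne h_lim

variable [Fact (1 ≤ p)] {h : α → ℝ≥0∞}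

lemma ae_lt_top_of_dense_setOf_lintegral_rpow_enorm_mul_lt_top [SigmaFinite μ] [Nontrivial E]
    (hp : p ≠ ∞) (hh : Measurable h)
    (hD : Dense {f : Lp E p μ | ∫⁻ x, ‖f x‖ₑ ^ p.toReal * h x ∂μ < ∞}) :
    ∀ᵐ x ∂μ, h x < ∞ := by
  have hp0 : p ≠ 0 := (zero_lt_one.trans_le Fact.out).ne'
  by_contra hne
  have h_top : 0 < μ {x | h x = ∞} := by
    simpa [ae_iff, pos_iff_ne_zero] using hne
  obtain ⟨S, hSm, hS_top, hS_pos, hS_fin⟩ :=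
    Measure.exists_subset_measure_lt_top (hh (measurableSet_singleton ∞)) h_top
  obtain ⟨c, hc⟩ := exists_ne (0 : E)
  set g := indicatorConstLp p hSm hS_fin.ne c
  have hg_pos : 0 < ‖g‖ := by
    rw [norm_indicatorConstLp hp0 hp]
    have : 0 < μ.real S := ENNReal.toReal_pos hS_pos.ne' hS_fin.ne
    positivity
  obtain ⟨f, hfD, hfg⟩ := hD.exists_dist_lt g hg_pos
  have hf0 : ∀ᵐ x ∂μ, x ∈ S → f x = 0 :=
    (ae_eq_zero_of_lintegral_rpow_enorm_mul_ne_top (toReal_pos hp0 hp)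
      (Lp.aestronglyMeasurable f) hh.aemeasurable hfD.ne).mono fun x hx hxS => hx (hS_top hxS)
  exact (Lp.norm_le_dist_of_ae_eq_zero_on hf0 indicatorConstLp_coeFn_notMem).not_gt hfg

lemma dense_setOf_lintegral_rpow_enorm_mul_lt_top (hp : p ≠ ∞) (hh : Measurable h)
    (hfin : ∀ᵐ x ∂μ, h x < ∞) :
    Dense {f : Lp E p μ | ∫⁻ x, ‖f x‖ₑ ^ p.toReal * h x ∂μ < ∞} := by
  intro F
  set s : ℕ → Set α := fun n => {x | h x ≤ n}
  have hs n : MeasurableSet (s n) := hh measurableSet_Iic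
  have hmem n : MemLp ((s n).indicator F) p μ := (Lp.memLp F).indicator (hs n)
  refine mem_closure_of_tendsto (f := fun n => (hmem n).toLp) (b := atTop) ?_
    (.of_forall fun n => ?_)
  · rw [Lp.tendsto_Lp_iff_tendsto_eLpNorm']
    refine (tendsto_eLpNorm_indicator_sub hp (Lp.memLp F) hs ?_).congr fun n =>
      eLpNorm_congr_ae ((hmem n).coeFn_toLp.symm.sub .rfl)
    filter_upwards [hfin] with x hx
    obtain ⟨N, hN⟩ := ENNReal.exists_nat_gt hx.ne
    exact eventually_atTop.2 ⟨N, fun n hn => hN.le.trans (by exact_mod_cast hn)⟩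
  · have hp0 : p ≠ 0 := (zero_lt_one.trans_le Fact.out).ne'
    have hq : 0 < p.toReal := toReal_pos hp0 hp
    calc ∫⁻ x, ‖(hmem n).toLp _ x‖ₑ ^ p.toReal * h x ∂μ
        = ∫⁻ x, ‖(s n).indicator F x‖ₑ ^ p.toReal * h x ∂μ :=
          lintegral_congr_ae ((hmem n).coeFn_toLp.mono fun x hx => by simp only [hx])
      _ ≤ ∫⁻ x, n * ‖F x‖ₑ ^ p.toReal ∂μ := lintegral_mono fun x => by
          by_cases hx : x ∈ s n
          · rw [Set.indicator_of_mem hx, mul_comm]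
            exact mul_le_mul_left hx _
          · simp [hx, hq]
      _ < ∞ := by
          rw [lintegral_const_mul' _ _ (natCast_ne_top n)]
          exact mul_lt_top (natCast_lt_top n)
            (lintegral_rpow_enorm_lt_top_of_eLpNorm_lt_top hp0 hp (Lp.eLpNorm_lt_top F))

lemma dense_setOf_lintegral_rpow_enorm_mul_lt_top_iff [SigmaFinite μ] [Nontrivial E]
    (hp : p ≠ ∞) (hh : Measurable h) :
    Dense {f : Lp E p μ | ∫⁻ x, ‖f x‖ₑ ^ p.toReal * h x ∂μ < ∞} ↔ ∀ᵐ x ∂μ, h x < ∞ :=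
  ⟨ae_lt_top_of_dense_setOf_lintegral_rpow_enorm_mul_lt_top hp hh,
    dense_setOf_lintegral_rpow_enorm_mul_lt_top hp hh⟩

end MeasureTheory

section WeightedComposition

instance wcMeasure.instSFinite (μ : Measure X) [SFinite μ] (w : X → ℂ) :
    SFinite (wcMeasure μ w) := by
  unfold wcMeasure; infer_instance

variable {μ : Measure X} {w : X → ℂ} {φ : X → X}

lemma ae_imp_comp_of_map_wcMeasure_ac (hw : Measurable w) (hφ : Measurable φ)
    (habs : (wcMeasure μ w).map φ ≪ μ) {P : X → Prop} (hP : ∀ᵐ x ∂μ, P x) :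
    ∀ᵐ x ∂μ, w x ≠ 0 → P (φ x) := by
  have h := ae_of_ae_map hφ.aemeasurable (habs.ae_le hP)
  rw [wcMeasure, ae_withDensity_iff (hw.nnnorm.coe_nnreal_ennreal.pow_const 2)] at h
  simpa using h

lemma weightedComp_congr_ae (hw : Measurable w) (hφ : Measurable φ)
    (habs : (wcMeasure μ w).map φ ≪ μ) {f₁ f₂ : X → ℂ} (hf : f₁ =ᵐ[μ] f₂) :
    (fun x => w x * f₁ (φ x)) =ᵐ[μ] fun x => w x * f₂ (φ x) :=
  (ae_imp_comp_of_map_wcMeasure_ac hw hφ habs hf).mono fun x hx => by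
    by_cases hwx : w x = 0 <;> simp [hwx, hx]

lemma lintegral_enorm_sq_mul_comp [SigmaFinite μ] (hw : Measurable w) (hφ : Measurable φ)
    (habs : (wcMeasure μ w).map φ ≪ μ) {g : X → ℝ≥0∞} (hg : AEMeasurable g μ) :
    ∫⁻ x, ‖w x‖ₑ ^ 2 * g (φ x) ∂μ = ∫⁻ x, g x * wcDeriv μ w φ x ∂μ := by
  have hg' : AEMeasurable g ((wcMeasure μ w).map φ) := hg.mono_ac habs
  calc ∫⁻ x, ‖w x‖ₑ ^ 2 * g (φ x) ∂μ = ∫⁻ x, g (φ x) ∂wcMeasure μ w :=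
        (lintegral_withDensity_eq_lintegral_mul₀'
          (hw.nnnorm.coe_nnreal_ennreal.pow_const 2).aemeasurable
          (hg'.comp_aemeasurable hφ.aemeasurable)).symm
    _ = ∫⁻ y, g y ∂(wcMeasure μ w).map φ := (lintegral_map' hg' hφ.aemeasurable).symm
    _ = ∫⁻ y, g y ∂μ.withDensity (wcDeriv μ w φ) := by
        rw [wcDeriv, Measure.withDensity_rnDeriv_eq _ _ habs]
    _ = ∫⁻ x, g x * wcDeriv μ w φ x ∂μ :=
        (lintegral_withDensity_eq_lintegral_mul₀ (f := wcDeriv μ w φ)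
          (Measure.measurable_rnDeriv _ _).aemeasurable hg).trans
          (by simp only [Pi.mul_apply, mul_comm])

lemma memLp_two_weightedComp_iff [SigmaFinite μ] (hw : Measurable w) (hφ : Measurable φ)
    (habs : (wcMeasure μ w).map φ ≪ μ) {f : X → ℂ} (hf : AEStronglyMeasurable f μ) :
    MemLp (fun x => w x * f (φ x)) 2 μ ↔ ∫⁻ x, ‖f x‖ₑ ^ (2 : ℝ) * wcDeriv μ w φ x ∂μ < ∞ := by
  have hf' := hf.stronglyMeasurable_mk.measurable
  have hm : AEStronglyMeasurable (fun x => w x * hf.mk f (φ x)) μ :=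
    (hw.mul (hf'.comp hφ)).aestronglyMeasurable
  rw [memLp_congr_ae (weightedComp_congr_ae hw hφ habs hf.ae_eq_mk),
    lintegral_congr_ae (g := fun x => ‖hf.mk f x‖ₑ ^ (2 : ℝ) * wcDeriv μ w φ x)
      (hf.ae_eq_mk.mono fun x hx => by simp only [hx]),
    ← lintegral_enorm_sq_mul_comp hw hφ habs
      (g := fun x => ‖hf.mk f x‖ₑ ^ (2 : ℝ)) (hf'.enorm.pow_const _).aemeasurable,
    MemLp, eLpNorm_lt_top_iff_lintegral_rpow_enorm_lt_top two_ne_zero ofNat_ne_top]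
  simp [hm, enorm_mul, mul_pow]

end WeightedComposition

/-- `C_{φ,w}` is densely defined in `L²(μ)` iff `h_{φ,w} < ∞` a.e. `[μ]`. -/
theorem aluthge_wco_denselyDefined_iff
    (μ : Measure X) [SigmaFinite μ] (w : X → ℂ) (φ : X → X)
    (hw : Measurable w) (hφ : Measurable φ)
    (habs : (wcMeasure μ w).map φ ≪ μ) :
    Dense {f : Lp ℂ 2 μ | MemLp (fun x => w x * (f : X → ℂ) (φ x)) 2 μ} ↔
      ∀ᵐ x ∂μ, wcDeriv μ w φ x < ⊤ := by
  have hdom : {f : Lp ℂ 2 μ | MemLp (fun x => w x * (f : X → ℂ) (φ x)) 2 μ} =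
      {f : Lp ℂ 2 μ | ∫⁻ x, ‖f x‖ₑ ^ (2 : ℝ≥0∞).toReal * wcDeriv μ w φ x ∂μ < ∞} := by
    ext f
    simpa using memLp_two_weightedComp_iff hw hφ habs (Lp.aestronglyMeasurable f)
  rw [hdom]
  exact dense_setOf_lintegral_rpow_enorm_mul_lt_top_iff ofNat_ne_top
    (Measure.measurable_rnDeriv _ _)
end

section
/- Assume the standing hypotheses with $C_{\phi,w}$ densely defined, and for $\alpha\in(0,1]$ define $w_\alpha = w\cdot\big(\mathsf{h}_{\phi,w}/(\mathsf{h}_{\phi,w}\circ\phi)\big)^{\alpha/2}$ (interpreted a.e. $[\mu]$, noting $\mathsf{h}_{\phi,w}\circ\phi>0$ a.e. $[\mu_w]$). Then $\mu_{w_\alpha}\circ\phi^{-1}\ll\mu$, so the weighted composition operator $C_{\phi,w_\alpha}$ is well-defined. -/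
open MeasureTheory ENNReal NNReal Filter Topology

variable {X : Type*} [MeasurableSpace X]

/-- With `w_α = w·(h_{φ,w}/(h_{φ,w}∘φ))^{α/2}` one has
`μ_{w_α} ∘ φ⁻¹ ≪ μ`, so `C_{φ,w_α}` is well-defined. -/
theorem aluthge_wco_alpha_absolutelyContinuous
    (μ : Measure X) [SigmaFinite μ] (w : X → ℂ) (φ : X → X)
    (hw : Measurable w) (hφ : Measurable φ)
    (habs : (wcMeasure μ w).map φ ≪ μ)
    (hfin : ∀ᵐ x ∂μ, wcDeriv μ w φ x < ⊤)
    (α : ℝ) (hα : α ∈ Set.Ioc (0 : ℝ) 1) :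
    (wcMeasure μ (wcAlpha μ w φ α)).map φ ≪ μ := by
  have hwα : Measurable (wcAlpha μ w φ α) := by
    apply hw.mul
    exact Complex.measurable_ofReal.comp (ENNReal.measurable_toReal.comp
      (((Measure.measurable_rnDeriv _ _).div
        ((Measure.measurable_rnDeriv _ _).comp hφ)).pow measurable_const))
  have key : wcMeasure μ (wcAlpha μ w φ α) ≪ wcMeasure μ w := by
    apply Measure.AbsolutelyContinuous.mk
    intro s hs h0
    rw [wcMeasure, withDensity_apply _ hs] at h0 ⊢
    rw [lintegral_eq_zero_iff (by fun_prop)] at h0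
    rw [lintegral_eq_zero_iff (by fun_prop)]
    filter_upwards [h0] with x hx
    have hw0 : w x = 0 := by simpa using hx
    simp [wcAlpha, hw0]
  exact (key.map hφ).trans habs
end

section
/- Assume the standing hypotheses with $C_{\phi,w}$ densely defined and let $\alpha\in(0,1]$, $w_\alpha = w\cdot(\mathsf{h}_{\phi,w}/(\mathsf{h}_{\phi,w}\circ\phi))^{\alpha/2}$. Then $\mathsf{h}_{\phi,w_\alpha} = \big(\mathsf{E}_{\phi,w}(\mathsf{h}_{\phi,w}^\alpha)\circ\phi^{-1}\big)\cdot \mathsf{h}_{\phi,w}^{1-\alpha}$ a.e. $[\mu]$, where $\mathsf{E}_{\phi,w}(\cdot)$ denotes the conditional expectation with respect to the $\sigma$-algebra $\phi^{-1}(\mathscr A)$ and measure $\mu_w$, and $\mathsf{E}_{\phi,w}(f)\circ\phi^{-1}$ denotes the measurable function $g$ with $g\circ\phi=\mathsf{E}_{\phi,w}(f)$ a.e. $[\mu_w]$ and $g=g\cdot\chi_{\{\mathsf{h}_{\phi,w}>0\}}$ a.e. $[\mu]$. -/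
open MeasureTheory ENNReal NNReal Filter Topology

variable {X : Type*} [MeasurableSpace X]

/-!
Write `h = h_{φ,w}` and `ν = μ_w`. The density of `μ_{w_α}` with respect to `ν` is
`(h/(h∘φ))^α = (h∘φ)^{-α} · h^α`, `ν`-a.e. (since `h∘φ > 0` and `h < ∞` there). The factor
`(h∘φ)^{-α}` is `φ⁻¹(𝒜)`-measurable, so by the pull-out property `h^α` may be replaced by its
conditional expectation `E = g∘φ`. Transporting by `φ` gives
`μ_{w_α} ∘ φ⁻¹ = (ν ∘ φ⁻¹).withDensity (h^{-α} g) = μ.withDensity (h · h^{-α} g)`,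
and `h · h^{-α} g = g · h^{1-α}` because `g` vanishes where `h = 0`.
-/

theorem setLIntegral_indicator_const_comp_mul {φ : X → X} (hφ : Measurable φ)
    {ν : Measure X} {s t : Set X} (ht : MeasurableSet t) {F : X → ℝ≥0∞} (hF : Measurable F)
    (c : ℝ≥0∞) :
    ∫⁻ x in φ ⁻¹' s, t.indicator (fun _ => c) (φ x) * F x ∂ν
      = c * ∫⁻ x in φ ⁻¹' (t ∩ s), F x ∂ν := by
  have hcomp : (fun x => t.indicator (fun _ => c) (φ x) * F x)
      = (φ ⁻¹' t).indicator fun x => c * F x := by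
    ext x
    by_cases hx : φ x ∈ t <;> simp [hx]
  rw [hcomp, lintegral_indicator (hφ ht), Measure.restrict_restrict (hφ ht),
    lintegral_const_mul c hF, Set.preimage_inter]

theorem IsCondExp.setLIntegral_comp_mul {φ : X → X} (hφ : Measurable φ) {ν : Measure X}
    {f E : X → ℝ≥0∞} (hE : IsCondExp φ ν f E) (hf : Measurable f)
    {G : X → ℝ≥0∞} (hG : Measurable G) {s : Set X} (hs : MeasurableSet s) :
    ∫⁻ x in φ ⁻¹' s, G (φ x) * E x ∂ν = ∫⁻ x in φ ⁻¹' s, G (φ x) * f x ∂ν := by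
  obtain ⟨hEφ, hEf⟩ := hE
  have hEm : Measurable E := hEφ.mono hφ.comap_le le_rfl
  refine Measurable.ennreal_induction (motive := fun G =>
      ∫⁻ x in φ ⁻¹' s, G (φ x) * E x ∂ν = ∫⁻ x in φ ⁻¹' s, G (φ x) * f x ∂ν)
    (fun c t ht => ?_) (fun G₁ G₂ _ hG₁ _ ih₁ ih₂ => ?_)
    (fun Gs hGs hGs_mono ih => ?_) hG
  · rw [setLIntegral_indicator_const_comp_mul hφ ht hEm,
      setLIntegral_indicator_const_comp_mul hφ ht hf, hEf (t ∩ s) (ht.inter hs)]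
  · simp only [Pi.add_apply, add_mul]
    rw [lintegral_add_left (f := fun x => G₁ (φ x) * E x) ((hG₁.comp hφ).mul hEm),
      lintegral_add_left (f := fun x => G₁ (φ x) * f x) ((hG₁.comp hφ).mul hf), ih₁, ih₂]
  · have hmono : ∀ F : X → ℝ≥0∞, Monotone fun n x => Gs n (φ x) * F x :=
      fun F _ _ hnm x => mul_le_mul_left (hGs_mono hnm _) _
    simp only [ENNReal.iSup_mul]
    rw [lintegral_iSup (f := fun n x => Gs n (φ x) * E x) (fun n => ((hGs n).comp hφ).mul hEm)
        (hmono E),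
      lintegral_iSup (f := fun n x => Gs n (φ x) * f x) (fun n => ((hGs n).comp hφ).mul hf)
        (hmono f)]
    exact iSup_congr ih

theorem IsCondExp.map_withDensity_comp_mul {φ : X → X} (hφ : Measurable φ) {ν : Measure X}
    {f E : X → ℝ≥0∞} (hE : IsCondExp φ ν f E) (hf : Measurable f) {G g : X → ℝ≥0∞}
    (hG : Measurable G) (hg : Measurable g) (hgE : ∀ᵐ x ∂ν, g (φ x) = E x) :
    (ν.withDensity fun x => G (φ x) * f x).map φ =
      (ν.map φ).withDensity fun y => G y * g y := by
  ext s hs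
  rw [Measure.map_apply hφ hs, withDensity_apply _ (hφ hs), withDensity_apply _ hs,
    setLIntegral_map (f := fun y => G y * g y) hs (hG.mul hg) hφ,
    ← hE.setLIntegral_comp_mul hφ hf hG hs]
  refine lintegral_congr_ae (ae_restrict_of_ae ?_)
  filter_upwards [hgE] with x hx
  rw [hx]

theorem ae_rnDeriv_map_comp_pos {φ : X → X} (hφ : Measurable φ) {μ ν : Measure X}
    [SigmaFinite μ] [SFinite ν] (hνμ : ν.map φ ≪ μ) :
    ∀ᵐ x ∂ν, 0 < (ν.map φ).rnDeriv μ (φ x) :=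
  ae_of_ae_map hφ.aemeasurable (Measure.rnDeriv_pos hνμ)

theorem ENNReal.ofReal_toReal_div_rpow_half_sq {a b : ℝ≥0∞} (ha : a ≠ ⊤) (hb : b ≠ 0)
    {α : ℝ} (hα : 0 ≤ α) :
    ENNReal.ofReal (((a / b) ^ (α / 2)).toReal) ^ 2 = (b ^ α)⁻¹ * a ^ α := by
  have hfin : (a / b) ^ (α / 2) ≠ ⊤ :=
    (ENNReal.rpow_lt_top_of_nonneg (by positivity) (ENNReal.div_lt_top ha hb).ne).ne
  rw [ENNReal.ofReal_toReal hfin, ← ENNReal.rpow_natCast, ← ENNReal.rpow_mul,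
    show α / 2 * (2 : ℕ) = α by push_cast; ring, ENNReal.div_rpow_of_nonneg _ _ hα,
    div_eq_mul_inv, mul_comm]

theorem ENNReal.mul_inv_rpow_mul_eq_mul_rpow_one_sub {a b : ℝ≥0∞} (ha : a ≠ ⊤)
    (hb : a = 0 → b = 0) (α : ℝ) : a * ((a ^ α)⁻¹ * b) = b * a ^ (1 - α) := by
  rcases eq_or_ne a 0 with rfl | ha0
  · simp [hb rfl]
  · rw [ENNReal.rpow_sub 1 α ha0 ha, ENNReal.rpow_one, div_eq_mul_inv]
    ring

theorem wcMeasure_wcAlpha (μ : Measure X) {w : X → ℂ} (hw : Measurable w) {φ : X → X}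
    (hφ : Measurable φ) (α : ℝ) :
    wcMeasure μ (wcAlpha μ w φ α) = (wcMeasure μ w).withDensity fun x =>
      ENNReal.ofReal (((wcDeriv μ w φ x / wcDeriv μ w φ (φ x)) ^ (α / 2)).toReal) ^ 2 := by
  have hh : Measurable (wcDeriv μ w φ) := Measure.measurable_rnDeriv _ _
  have hk : Measurable fun x =>
      ENNReal.ofReal (((wcDeriv μ w φ x / wcDeriv μ w φ (φ x)) ^ (α / 2)).toReal) ^ 2 := by
    fun_prop
  rw [wcMeasure, wcMeasure, ← withDensity_mul μ (by fun_prop) hk]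
  congr 1
  ext x
  simp only [wcAlpha, Pi.mul_apply, nnnorm_mul, ENNReal.coe_mul, mul_pow, Complex.nnnorm_real,
    ← enorm_eq_nnnorm, Real.enorm_eq_ofReal ENNReal.toReal_nonneg]

instance (μ : Measure X) [SFinite μ] (w : X → ℂ) : SFinite (wcMeasure μ w) := by
  unfold wcMeasure
  infer_instance

/-- `h_{φ,w_α} = (E_{φ,w}(h_{φ,w}^α) ∘ φ⁻¹) · h_{φ,w}^{1-α}` a.e. `[μ]`. -/
theorem aluthge_wco_deriv_alpha
    (μ : Measure X) [SigmaFinite μ] (w : X → ℂ) (φ : X → X)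
    (hw : Measurable w) (hφ : Measurable φ)
    (habs : (wcMeasure μ w).map φ ≪ μ)
    (hfin : ∀ᵐ x ∂μ, wcDeriv μ w φ x < ⊤)
    (α : ℝ) (hα : α ∈ Set.Ioc (0 : ℝ) 1)
    (E g : X → ℝ≥0∞)
    (hE : IsCondExp φ (wcMeasure μ w) (fun x => wcDeriv μ w φ x ^ α) E)
    (hg : IsQuot φ μ (wcMeasure μ w) (wcDeriv μ w φ) E g) :
    ∀ᵐ x ∂μ, wcDeriv μ (wcAlpha μ w φ α) φ x = g x * wcDeriv μ w φ x ^ (1 - α) := by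
  obtain ⟨hgm, hgE, hg0⟩ := hg
  set h := wcDeriv μ w φ
  set ν := wcMeasure μ w
  have hh : Measurable h := Measure.measurable_rnDeriv _ _
  have hνμ : ν ≪ μ := withDensity_absolutelyContinuous μ _
  have hνφ : ν.map φ = μ.withDensity h := (Measure.withDensity_rnDeriv_eq _ _ habs).symm
  have hdensity : ∀ᵐ x ∂ν, ENNReal.ofReal (((h x / h (φ x)) ^ (α / 2)).toReal) ^ 2
      = (h (φ x) ^ α)⁻¹ * h x ^ α := by
    filter_upwards [hνμ.ae_le hfin, ae_rnDeriv_map_comp_pos hφ habs] with x hx hφx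
    exact ENNReal.ofReal_toReal_div_rpow_half_sq hx.ne hφx.ne' hα.1.le
  have hmap : (wcMeasure μ (wcAlpha μ w φ α)).map φ
      = μ.withDensity fun y => g y * h y ^ (1 - α) := by
    rw [wcMeasure_wcAlpha μ hw hφ, withDensity_congr_ae hdensity,
      hE.map_withDensity_comp_mul (G := fun y => (h y ^ α)⁻¹) hφ (hh.pow_const α)
        (hh.pow_const α).inv hgm hgE,
      hνφ, ← withDensity_mul μ (g := fun y => (h y ^ α)⁻¹ * g y) hh (by fun_prop)]
    refine withDensity_congr_ae ?_
    filter_upwards [hfin, hg0] with y hy hy0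
    exact ENNReal.mul_inv_rpow_mul_eq_mul_rpow_one_sub hy.ne hy0 α
  rw [wcDeriv, hmap]
  exact Measure.rnDeriv_withDensity μ (hgm.mul (hh.pow_const _))
end

section
/- Assume the standing hypotheses with $C_{\phi,w}$ densely defined and let $\alpha\in(0,1]$. The domain of the $\alpha$-Aluthge transform $\Delta_\alpha(C_{\phi,w}) = |C_{\phi,w}|^{\alpha} U |C_{\phi,w}|^{1-\alpha}$ (with $C_{\phi,w}=U|C_{\phi,w}|$ the polar decomposition) equals $L^2\big((1+\mathsf{h}_{\phi,w}^{1-\alpha}+\mathsf{E}_{\phi,w}(\mathsf{h}_{\phi,w}^\alpha)\circ\phi^{-1}\cdot\mathsf{h}_{\phi,w}^{1-\alpha})\,d\mu\big)$. -/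
open MeasureTheory ENNReal NNReal Filter Topology

variable {X : Type*} [MeasurableSpace X]

/-- The weight `w̃ = w/(h_{φ,w}∘φ)^{1/2}` of the partial isometry in the polar
decomposition `C_{φ,w} = U |C_{φ,w}|`, `U = C_{φ,w̃}`. -/
noncomputable def wcTilde (μ : Measure X) (w : X → ℂ) (φ : X → X) : X → ℂ :=
  fun x => w x * (((wcDeriv μ w φ (φ x)) ^ (-(1 / 2) : ℝ)).toReal : ℂ)

/-- The function `Δ_α(C_{φ,w}) f = |C_{φ,w}|^α U |C_{φ,w}|^{1-α} f`, computed via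
`|C_{φ,w}| = M_{h^{1/2}}` and `U = C_{φ,w̃}`. -/
noncomputable def aluthgeFun (μ : Measure X) (w : X → ℂ) (φ : X → X) (α : ℝ) (f : X → ℂ) :
    X → ℂ :=
  fun x => ((wcDeriv μ w φ x ^ (α / 2)).toReal : ℂ) *
    (wcTilde μ w φ x * (((wcDeriv μ w φ (φ x)) ^ ((1 - α) / 2)).toReal : ℂ) * f (φ x))

/-- Membership in the domain of the Aluthge transform
`Δ_α(C_{φ,w}) = |C_{φ,w}|^α U |C_{φ,w}|^{1-α}`. -/
noncomputable def aluthgeDom (μ : Measure X) (w : X → ℂ) (φ : X → X) (α : ℝ) (f : X → ℂ) :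
    Prop :=
  MemLp f 2 μ ∧
  MemLp (fun x => ((wcDeriv μ w φ x ^ ((1 - α) / 2)).toReal : ℂ) * f x) 2 μ ∧
  MemLp (fun x =>
    wcTilde μ w φ x * (((wcDeriv μ w φ (φ x)) ^ ((1 - α) / 2)).toReal : ℂ) * f (φ x)) 2 μ ∧
  MemLp (aluthgeFun μ w φ α f) 2 μ

/-!
Write `ν = μ_w` and `h = h_{φ,w}`. Every squared norm in the domain condition is computed by
pushing forward along `φ`: `∫ |w|² G∘φ dμ = ∫ G∘φ dν = ∫ h G dμ`. Since `h∘φ ∈ (0, ∞)` `ν`-a.e.,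
the weights of `U |C_{φ,w}|^{1-α} f` collapse to `(h^{-α} |f|²)∘φ`, so its squared norm is
`∫ h h^{-α} |f|² dμ ≤ ∫ h^{1-α} |f|² dμ`. For `Δ_α(C_{φ,w}) f` the extra factor `h^α` may be
replaced by its conditional expectation `E = g∘φ` before pushing forward, which gives
`∫ g h^{1-α} |f|² dμ`. A merely a.e.-measurable `f` is first replaced by a measurable version:
`f∘φ` is then only changed on a `ν`-null set, which is harmless because it always carries the
factor `w`.
-/

theorem memLp_two_iff_lintegral_nnnorm_sq_lt_top {E : Type*} [NormedAddCommGroup E]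
    {μ : Measure X} {f : X → E} (hf : AEStronglyMeasurable f μ) :
    MemLp f 2 μ ↔ ∫⁻ x, (‖f x‖₊ : ℝ≥0∞) ^ 2 ∂μ < ⊤ := by
  rw [MemLp, and_iff_right hf,
    eLpNorm_lt_top_iff_lintegral_rpow_enorm_lt_top two_ne_zero ofNat_ne_top]
  simp [enorm_eq_nnnorm]

theorem Complex.nnnorm_ofReal_toReal_rpow_sq {a : ℝ≥0∞} {r : ℝ} (ha : a ^ r ≠ ⊤) :
    (‖((a ^ r).toReal : ℂ)‖₊ : ℝ≥0∞) ^ 2 = a ^ (2 * r) := by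
  rw [Complex.nnnorm_real, ← enorm_eq_nnnorm, Real.enorm_eq_ofReal toReal_nonneg,
    ofReal_toReal ha, ← ENNReal.rpow_natCast, ← ENNReal.rpow_mul, mul_comm]
  norm_num

namespace ENNReal

theorem mul_rpow_neg_of_ne_zero {a : ℝ≥0∞} (h0 : a ≠ 0) (htop : a ≠ ⊤) (s : ℝ) :
    a * a ^ (-s) = a ^ (1 - s) := by
  rw [sub_eq_add_neg, rpow_add _ _ h0 htop, rpow_one]

theorem mul_rpow_neg_le {a : ℝ≥0∞} (htop : a ≠ ⊤) (s : ℝ) : a * a ^ (-s) ≤ a ^ (1 - s) := by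
  rcases eq_or_ne a 0 with rfl | h0
  · simp
  · exact (mul_rpow_neg_of_ne_zero h0 htop s).le

end ENNReal

section ChangeOfVariables

variable {Y : Type*} [MeasurableSpace Y] {ν : Measure X} {μ : Measure Y} {φ : X → Y}

theorem lintegral_comp_eq_lintegral_rnDeriv_map_mul [(ν.map φ).HaveLebesgueDecomposition μ]
    (hφ : Measurable φ) (hac : ν.map φ ≪ μ) {G : Y → ℝ≥0∞} (hG : Measurable G) :
    ∫⁻ x, G (φ x) ∂ν = ∫⁻ y, (ν.map φ).rnDeriv μ y * G y ∂μ := by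
  rw [← lintegral_map hG hφ, lintegral_rnDeriv_mul hac hG.aemeasurable]

theorem ae_rnDeriv_map_comp_ne_zero [(ν.map φ).HaveLebesgueDecomposition μ]
    (hφ : AEMeasurable φ ν) (hac : ν.map φ ≪ μ) :
    ∀ᵐ x ∂ν, (ν.map φ).rnDeriv μ (φ x) ≠ 0 :=
  ae_of_ae_map hφ ((Measure.rnDeriv_pos hac).mono fun _ hx => hx.ne')

theorem ae_comp_eq_of_map_withDensity_ac {Z : Type*} {ρ : X → ℝ≥0∞} (hρ : Measurable ρ)
    (hφ : Measurable φ) (hac : (ν.withDensity ρ).map φ ≪ μ) {f f' : Y → Z} (h : f =ᵐ[μ] f') :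
    ∀ᵐ x ∂ν, ρ x ≠ 0 → f (φ x) = f' (φ x) :=
  (ae_withDensity_iff hρ).mp (ae_eq_comp hφ.aemeasurable (hac.ae_le h))

end ChangeOfVariables

theorem IsCondExp.lintegral_mul_comp {φ : X → X} {ν : Measure X} {F E : X → ℝ≥0∞}
    (hE : IsCondExp φ ν F E) (hφ : Measurable φ) (hF : Measurable F) {G : X → ℝ≥0∞}
    (hG : Measurable G) :
    ∫⁻ x, F x * G (φ x) ∂ν = ∫⁻ x, E x * G (φ x) ∂ν := by
  have hEm : Measurable E := hE.1.mono (measurable_iff_comap_le.mp hφ) le_rfl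
  have hmap : (ν.withDensity F).map φ = (ν.withDensity E).map φ := by
    ext s hs
    rw [Measure.map_apply hφ hs, Measure.map_apply hφ hs, withDensity_apply _ (hφ hs),
      withDensity_apply _ (hφ hs), hE.2 s hs]
  have hpush : ∀ D : X → ℝ≥0∞, Measurable D →
      ∫⁻ x, D x * G (φ x) ∂ν = ∫⁻ y, G y ∂(ν.withDensity D).map φ := fun D hD => by
    rw [lintegral_map hG hφ]
    exact (lintegral_withDensity_eq_lintegral_mul _ hD (hG.comp hφ)).symm
  rw [hpush F hF, hmap, ← hpush E hEm]

instance inst_s8 (μ : Measure X) [SFinite μ] (w : X → ℂ) : SFinite (wcMeasure μ w) :=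
  inferInstanceAs (SFinite (μ.withDensity _))

theorem lintegral_wcMeasure (μ : Measure X) {w : X → ℂ} (hw : Measurable w) (F : X → ℝ≥0∞) :
    ∫⁻ x, F x ∂wcMeasure μ w = ∫⁻ x, (‖w x‖₊ : ℝ≥0∞) ^ 2 * F x ∂μ :=
  lintegral_withDensity_eq_lintegral_mul_non_measurable μ (by fun_prop)
    (ae_of_all _ fun _ => by simp) F

/-- The function `U |C_{φ,w}|^{1-α} f`, with `U = C_{φ,w̃}`. -/
noncomputable def aluthgeRight (μ : Measure X) (w : X → ℂ) (φ : X → X) (α : ℝ) (f : X → ℂ) :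
    X → ℂ :=
  fun x => wcTilde μ w φ x * (((wcDeriv μ w φ (φ x)) ^ ((1 - α) / 2)).toReal : ℂ) * f (φ x)

section Aluthge

variable {μ : Measure X} {w : X → ℂ} {φ : X → X} {α : ℝ}

theorem measurable_aluthgeRight (hw : Measurable w) (hφ : Measurable φ) {f : X → ℂ}
    (hf : Measurable f) : Measurable (aluthgeRight μ w φ α f) := by
  have hh : Measurable (wcDeriv μ w φ) := Measure.measurable_rnDeriv _ _
  unfold aluthgeRight wcTilde
  fun_prop

theorem aluthgeDom_congr_ae (hw : Measurable w) (hφ : Measurable φ)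
    (habs : (wcMeasure μ w).map φ ≪ μ) {f f' : X → ℂ} (h : f =ᵐ[μ] f') :
    aluthgeDom μ w φ α f ↔ aluthgeDom μ w φ α f' := by
  have hR : aluthgeRight μ w φ α f =ᵐ[μ] aluthgeRight μ w φ α f' := by
    filter_upwards [ae_comp_eq_of_map_withDensity_ac (by fun_prop) hφ habs h] with x hx
    by_cases hw0 : w x = 0
    · simp [aluthgeRight, wcTilde, hw0]
    · simp [aluthgeRight, hx (by simpa using hw0)]
  exact and_congr (memLp_congr_ae h) <| and_congr (memLp_congr_ae (EventuallyEq.rfl.mul h)) <|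
    and_congr (memLp_congr_ae hR) (memLp_congr_ae (EventuallyEq.rfl.mul hR))

variable [SigmaFinite μ]

theorem lintegral_mul_nnnorm_sq_aluthgeRight (hw : Measurable w) (hφ : Measurable φ)
    (habs : (wcMeasure μ w).map φ ≪ μ) (hfin : ∀ᵐ x ∂μ, wcDeriv μ w φ x < ⊤) (f : X → ℂ)
    (c : X → ℝ≥0∞) :
    ∫⁻ x, c x * (‖aluthgeRight μ w φ α f x‖₊ : ℝ≥0∞) ^ 2 ∂μ =
      ∫⁻ x, c x * (wcDeriv μ w φ (φ x) ^ (-α) * (‖f (φ x)‖₊ : ℝ≥0∞) ^ 2) ∂wcMeasure μ w := by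
  set h := wcDeriv μ w φ
  have hfactor : ∀ᵐ x ∂wcMeasure μ w,
      (‖((h (φ x) ^ (-(1 / 2) : ℝ)).toReal : ℂ)‖₊ : ℝ≥0∞) ^ 2 *
        (‖((h (φ x) ^ ((1 - α) / 2)).toReal : ℂ)‖₊ : ℝ≥0∞) ^ 2 = h (φ x) ^ (-α) := by
    have hne : ∀ᵐ x ∂wcMeasure μ w, h (φ x) ≠ 0 :=
      ae_rnDeriv_map_comp_ne_zero hφ.aemeasurable habs
    filter_upwards [hne, ae_of_ae_map hφ.aemeasurable (habs.ae_le hfin)] with x h0 htop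
    rw [Complex.nnnorm_ofReal_toReal_rpow_sq (rpow_ne_top_of_ne_zero h0 htop.ne),
      Complex.nnnorm_ofReal_toReal_rpow_sq (rpow_ne_top_of_ne_zero h0 htop.ne),
      ← rpow_add _ _ h0 htop.ne]
    ring_nf
  calc ∫⁻ x, c x * (‖aluthgeRight μ w φ α f x‖₊ : ℝ≥0∞) ^ 2 ∂μ
      = ∫⁻ x, (‖w x‖₊ : ℝ≥0∞) ^ 2 * (c x *
          ((‖((h (φ x) ^ (-(1 / 2) : ℝ)).toReal : ℂ)‖₊ : ℝ≥0∞) ^ 2 *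
            (‖((h (φ x) ^ ((1 - α) / 2)).toReal : ℂ)‖₊ : ℝ≥0∞) ^ 2 *
            (‖f (φ x)‖₊ : ℝ≥0∞) ^ 2)) ∂μ := by
        refine lintegral_congr fun x => ?_
        simp only [aluthgeRight, wcTilde, nnnorm_mul, coe_mul, mul_pow]
        ring
    _ = ∫⁻ x, c x * ((‖((h (φ x) ^ (-(1 / 2) : ℝ)).toReal : ℂ)‖₊ : ℝ≥0∞) ^ 2 *
            (‖((h (φ x) ^ ((1 - α) / 2)).toReal : ℂ)‖₊ : ℝ≥0∞) ^ 2 *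
            (‖f (φ x)‖₊ : ℝ≥0∞) ^ 2) ∂wcMeasure μ w := (lintegral_wcMeasure μ hw _).symm
    _ = _ := lintegral_congr_ae <| by filter_upwards [hfactor] with x hx; rw [hx]

theorem lintegral_nnnorm_sq_aluthgeRight_le (hw : Measurable w) (hφ : Measurable φ)
    (habs : (wcMeasure μ w).map φ ≪ μ) (hfin : ∀ᵐ x ∂μ, wcDeriv μ w φ x < ⊤) {f : X → ℂ}
    (hf : Measurable f) :
    ∫⁻ x, (‖aluthgeRight μ w φ α f x‖₊ : ℝ≥0∞) ^ 2 ∂μ ≤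
      ∫⁻ x, (‖f x‖₊ : ℝ≥0∞) ^ 2 * wcDeriv μ w φ x ^ (1 - α) ∂μ := by
  set h := wcDeriv μ w φ
  have hh : Measurable h := Measure.measurable_rnDeriv _ _
  calc ∫⁻ x, (‖aluthgeRight μ w φ α f x‖₊ : ℝ≥0∞) ^ 2 ∂μ
      = ∫⁻ x, h (φ x) ^ (-α) * (‖f (φ x)‖₊ : ℝ≥0∞) ^ 2 ∂wcMeasure μ w := by
        simpa only [Pi.one_apply, one_mul] using
          lintegral_mul_nnnorm_sq_aluthgeRight (α := α) hw hφ habs hfin f 1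
    _ = ∫⁻ y, h y * (h y ^ (-α) * (‖f y‖₊ : ℝ≥0∞) ^ 2) ∂μ :=
        lintegral_comp_eq_lintegral_rnDeriv_map_mul hφ habs
          (G := fun y => h y ^ (-α) * (‖f y‖₊ : ℝ≥0∞) ^ 2) (by fun_prop)
    _ ≤ _ := lintegral_mono_ae <| by
        filter_upwards [hfin] with y hy
        rw [← mul_assoc, mul_comm _ ((‖f y‖₊ : ℝ≥0∞) ^ 2)]
        gcongr
        exact mul_rpow_neg_le hy.ne α

theorem lintegral_nnnorm_sq_aluthgeFun (hw : Measurable w) (hφ : Measurable φ)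
    (habs : (wcMeasure μ w).map φ ≪ μ) (hfin : ∀ᵐ x ∂μ, wcDeriv μ w φ x < ⊤) (hα : 0 ≤ α)
    {E g : X → ℝ≥0∞} (hE : IsCondExp φ (wcMeasure μ w) (fun x => wcDeriv μ w φ x ^ α) E)
    (hg : IsQuot φ μ (wcMeasure μ w) (wcDeriv μ w φ) E g) {f : X → ℂ} (hf : Measurable f) :
    ∫⁻ x, (‖aluthgeFun μ w φ α f x‖₊ : ℝ≥0∞) ^ 2 ∂μ =
      ∫⁻ x, (‖f x‖₊ : ℝ≥0∞) ^ 2 * (g x * wcDeriv μ w φ x ^ (1 - α)) ∂μ := by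
  set h := wcDeriv μ w φ
  have hh : Measurable h := Measure.measurable_rnDeriv _ _
  set P : X → ℝ≥0∞ := fun y => h y ^ (-α) * (‖f y‖₊ : ℝ≥0∞) ^ 2
  have hP : Measurable P := by fun_prop
  have hlt : ∀ᵐ x ∂wcMeasure μ w, h x < ⊤ := (withDensity_absolutelyContinuous μ _).ae_le hfin
  calc ∫⁻ x, (‖aluthgeFun μ w φ α f x‖₊ : ℝ≥0∞) ^ 2 ∂μ
      = ∫⁻ x, (‖((h x ^ (α / 2)).toReal : ℂ)‖₊ : ℝ≥0∞) ^ 2 *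
          (‖aluthgeRight μ w φ α f x‖₊ : ℝ≥0∞) ^ 2 ∂μ := by
        simp only [aluthgeFun, aluthgeRight, nnnorm_mul, coe_mul, mul_pow]
        rfl
    _ = ∫⁻ x, (‖((h x ^ (α / 2)).toReal : ℂ)‖₊ : ℝ≥0∞) ^ 2 * P (φ x) ∂wcMeasure μ w :=
        lintegral_mul_nnnorm_sq_aluthgeRight hw hφ habs hfin f _
    _ = ∫⁻ x, h x ^ α * P (φ x) ∂wcMeasure μ w := lintegral_congr_ae <| by
        filter_upwards [hlt] with x hx
        rw [Complex.nnnorm_ofReal_toReal_rpow_sq (rpow_ne_top_of_nonneg (by linarith) hx.ne),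
          show 2 * (α / 2) = α by ring]
    _ = ∫⁻ x, E x * P (φ x) ∂wcMeasure μ w := hE.lintegral_mul_comp hφ (by fun_prop) hP
    _ = ∫⁻ x, (g * P) (φ x) ∂wcMeasure μ w :=
        lintegral_congr_ae <| by filter_upwards [hg.2.1] with x hx; rw [← hx]; rfl
    _ = ∫⁻ y, h y * (g * P) y ∂μ := lintegral_comp_eq_lintegral_rnDeriv_map_mul hφ habs (hg.1.mul hP)
    _ = _ := lintegral_congr_ae <| by
        filter_upwards [hfin, hg.2.2] with y htop hg0
        rcases eq_or_ne (h y) 0 with h0 | h0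
        · simp [h0, hg0 h0]
        · rw [Pi.mul_apply, ← mul_rpow_neg_of_ne_zero h0 htop.ne]
          ring

theorem aluthgeDom_iff_lintegral_lt_top_of_measurable (hw : Measurable w) (hφ : Measurable φ)
    (habs : (wcMeasure μ w).map φ ≪ μ) (hfin : ∀ᵐ x ∂μ, wcDeriv μ w φ x < ⊤)
    (hα : α ∈ Set.Icc (0 : ℝ) 1) {E g : X → ℝ≥0∞}
    (hE : IsCondExp φ (wcMeasure μ w) (fun x => wcDeriv μ w φ x ^ α) E)
    (hg : IsQuot φ μ (wcMeasure μ w) (wcDeriv μ w φ) E g) {f : X → ℂ} (hf : Measurable f) :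
    aluthgeDom μ w φ α f ↔
      ∫⁻ x, (‖f x‖₊ : ℝ≥0∞) ^ 2 *
        (1 + wcDeriv μ w φ x ^ (1 - α) + g x * wcDeriv μ w φ x ^ (1 - α)) ∂μ < ⊤ := by
  set h := wcDeriv μ w φ
  have hh : Measurable h := Measure.measurable_rnDeriv _ _
  have hsplit : ∫⁻ x, (‖f x‖₊ : ℝ≥0∞) ^ 2 * (1 + h x ^ (1 - α) + g x * h x ^ (1 - α)) ∂μ =
      ∫⁻ x, (‖f x‖₊ : ℝ≥0∞) ^ 2 ∂μ + ∫⁻ x, (‖f x‖₊ : ℝ≥0∞) ^ 2 * h x ^ (1 - α) ∂μ +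
        ∫⁻ x, (‖f x‖₊ : ℝ≥0∞) ^ 2 * (g x * h x ^ (1 - α)) ∂μ := by
    simp only [mul_add, mul_one]
    rw [lintegral_add_left (by fun_prop), lintegral_add_left (by fun_prop)]
  have hmem2 : MemLp (fun x => ((h x ^ ((1 - α) / 2)).toReal : ℂ) * f x) 2 μ ↔
      ∫⁻ x, (‖f x‖₊ : ℝ≥0∞) ^ 2 * h x ^ (1 - α) ∂μ < ⊤ := by
    rw [memLp_two_iff_lintegral_nnnorm_sq_lt_top (by fun_prop)]
    rw [lintegral_congr_ae (g := fun x => (‖f x‖₊ : ℝ≥0∞) ^ 2 * h x ^ (1 - α))]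
    filter_upwards [hfin] with x hx
    rw [nnnorm_mul, coe_mul, mul_pow, mul_comm, Complex.nnnorm_ofReal_toReal_rpow_sq
      (rpow_ne_top_of_nonneg (by linarith [hα.2]) hx.ne), show 2 * ((1 - α) / 2) = 1 - α by ring]
  have hmem3 : ∫⁻ x, (‖f x‖₊ : ℝ≥0∞) ^ 2 * h x ^ (1 - α) ∂μ < ⊤ →
      MemLp (aluthgeRight μ w φ α f) 2 μ := fun hlt =>
    (memLp_two_iff_lintegral_nnnorm_sq_lt_top
      (measurable_aluthgeRight hw hφ hf).aestronglyMeasurable).mpr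
      ((lintegral_nnnorm_sq_aluthgeRight_le hw hφ habs hfin hf).trans_lt hlt)
  have hmem4 : MemLp (aluthgeFun μ w φ α f) 2 μ ↔
      ∫⁻ x, (‖f x‖₊ : ℝ≥0∞) ^ 2 * (g x * h x ^ (1 - α)) ∂μ < ⊤ := by
    have hm : Measurable (aluthgeFun μ w φ α f) :=
      (by fun_prop : Measurable fun x => ((h x ^ (α / 2)).toReal : ℂ)).mul
        (measurable_aluthgeRight hw hφ hf)
    rw [memLp_two_iff_lintegral_nnnorm_sq_lt_top hm.aestronglyMeasurable,
      lintegral_nnnorm_sq_aluthgeFun hw hφ habs hfin hα.1 hE hg hf]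
  rw [hsplit, add_lt_top, add_lt_top, ← memLp_two_iff_lintegral_nnnorm_sq_lt_top
    hf.aestronglyMeasurable, ← hmem2, ← hmem4]
  constructor
  · rintro ⟨h1, h2, -, h4⟩
    exact ⟨⟨h1, h2⟩, h4⟩
  · rintro ⟨⟨h1, h2⟩, h4⟩
    exact ⟨h1, h2, hmem3 (hmem2.mp h2), h4⟩

end Aluthge

/-- The domain of `Δ_α(C_{φ,w})` equals
`L²((1 + h^{1-α} + E_{φ,w}(h^α)∘φ⁻¹ · h^{1-α}) dμ)`. -/
theorem aluthge_wco_transform_domain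
    (μ : Measure X) [SigmaFinite μ] (w : X → ℂ) (φ : X → X)
    (hw : Measurable w) (hφ : Measurable φ)
    (habs : (wcMeasure μ w).map φ ≪ μ)
    (hfin : ∀ᵐ x ∂μ, wcDeriv μ w φ x < ⊤)
    (α : ℝ) (hα : α ∈ Set.Ioc (0 : ℝ) 1)
    (E g : X → ℝ≥0∞)
    (hE : IsCondExp φ (wcMeasure μ w) (fun x => wcDeriv μ w φ x ^ α) E)
    (hg : IsQuot φ μ (wcMeasure μ w) (wcDeriv μ w φ) E g)
    (f : X → ℂ) (hf : AEStronglyMeasurable f μ) :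
    aluthgeDom μ w φ α f ↔
      ∫⁻ x, (‖f x‖₊ : ℝ≥0∞) ^ 2 *
        (1 + wcDeriv μ w φ x ^ (1 - α) + g x * wcDeriv μ w φ x ^ (1 - α)) ∂μ < ⊤ := by
  have hff' : f =ᵐ[μ] hf.aemeasurable.mk f := hf.aemeasurable.ae_eq_mk
  rw [aluthgeDom_congr_ae hw hφ habs hff',
    lintegral_congr_ae (by filter_upwards [hff'] with x hx; rw [hx])]
  exact aluthgeDom_iff_lintegral_lt_top_of_measurable hw hφ habs hfin (Set.Ioc_subset_Icc_self hα)
    hE hg hf.aemeasurable.measurable_mk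
end

section
/- Assume the standing hypotheses with $C_{\phi,w}$ densely defined and $\alpha\in(0,1]$. Then $\Delta_\alpha(C_{\phi,w})\subseteq C_{\phi,w_\alpha}$ where $w_\alpha=w\cdot(\mathsf{h}_{\phi,w}/(\mathsf{h}_{\phi,w}\circ\phi))^{\alpha/2}$; in particular $\Delta_\alpha(C_{\phi,w})$ is closable and its closure equals $C_{\phi,w_\alpha}$. -/
open MeasureTheory ENNReal NNReal Filter Topology

variable {X : Type*} [MeasurableSpace X]

/-!
With `|C_{φ,w}| = M_{h^{1/2}}` and `U = C_{φ,w̃}`, the three factors of `Δ_α(C_{φ,w})` multiply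
pointwise to `w · h^{α/2} (h∘φ)^{-α/2} = w_α`, so `Δ_α(C_{φ,w}) f = C_{φ,w_α} f` wherever `h < ∞`,
i.e. almost everywhere. For the closure, truncate `f` to the set where `h = 0` or `1/n ≤ h ≤ n`:
there every intermediate multiplier is bounded, and `‖w · f∘φ‖₂² = ∫ h |f|²` (because
`μ_w ∘ φ⁻¹ = h μ`) keeps the truncations in the domain. Dominated convergence then gives
convergence in graph norm; the pointwise limits transfer along `φ` because a `μ`-null set pulls
back under `φ` to a set on which `w = 0` almost everywhere.
-/

section

variable {μ : Measure X} {w : X → ℂ} {φ : X → X}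

instance [SFinite μ] : SFinite (wcMeasure μ w) := by
  unfold wcMeasure
  infer_instance

lemma measurable_wcDeriv : Measurable (wcDeriv μ w φ) := Measure.measurable_rnDeriv _ _

lemma measurable_wcAlpha (hw : Measurable w) (hφ : Measurable φ) (α : ℝ) :
    Measurable (wcAlpha μ w φ α) := by
  have := measurable_wcDeriv (μ := μ) (w := w) (φ := φ)
  unfold wcAlpha
  fun_prop

lemma measurable_wcTilde (hw : Measurable w) (hφ : Measurable φ) :
    Measurable (wcTilde μ w φ) := by
  have := measurable_wcDeriv (μ := μ) (w := w) (φ := φ)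
  unfold wcTilde
  fun_prop

lemma ae_imp_comp_of_ne_zero (hw : Measurable w) (hφ : Measurable φ)
    (habs : (wcMeasure μ w).map φ ≪ μ) {p : X → Prop} (hp : ∀ᵐ y ∂μ, p y) :
    ∀ᵐ x ∂μ, w x ≠ 0 → p (φ x) := by
  have h : ∀ᵐ x ∂wcMeasure μ w, p (φ x) := (Measure.QuasiMeasurePreserving.mk hφ habs).ae hp
  rw [wcMeasure, ae_withDensity_iff (by fun_prop)] at h
  simpa using h

lemma lintegral_enorm_mul_comp_sq [SigmaFinite μ] (hw : Measurable w) (hφ : Measurable φ)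
    (habs : (wcMeasure μ w).map φ ≪ μ) {g : X → ℂ} (hg : Measurable g) :
    ∫⁻ x, ‖w x * g (φ x)‖ₑ ^ 2 ∂μ = ∫⁻ x, wcDeriv μ w φ x * ‖g x‖ₑ ^ 2 ∂μ := by
  rw [wcDeriv, lintegral_rnDeriv_mul habs (by fun_prop), lintegral_map (by fun_prop) hφ,
    wcMeasure, lintegral_withDensity_eq_lintegral_mul _ (by fun_prop) (by fun_prop)]
  simp [mul_pow, enorm_eq_nnnorm]

end

lemma memLp_two_iff_lintegral_enorm_sq_lt_top {E : Type*} [NormedAddCommGroup E]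
    {μ : Measure X} {f : X → E} (hf : AEStronglyMeasurable f μ) :
    MemLp f 2 μ ↔ ∫⁻ x, ‖f x‖ₑ ^ 2 ∂μ < ∞ := by
  rw [MemLp, eLpNorm_lt_top_iff_lintegral_rpow_enorm_lt_top two_ne_zero ofNat_ne_top]
  simp [hf]

lemma toReal_rpow_mul_rpow_neg_half_mul_rpow_one_sub {α : ℝ} (hα : 0 < α) {a b : ℝ≥0∞}
    (hb : b ≠ ∞) :
    (b ^ (α / 2)).toReal * ((a ^ (-(1 / 2) : ℝ)).toReal * (a ^ ((1 - α) / 2)).toReal) =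
      ((b / a) ^ (α / 2)).toReal := by
  rcases eq_or_ne a 0 with rfl | ha0
  · rcases eq_or_ne b 0 with rfl | hb0
    · simp [ENNReal.zero_rpow_of_pos, hα]
    · simp [ENNReal.div_zero hb0, ENNReal.top_rpow_of_pos, hα]
  rcases eq_or_ne a ∞ with rfl | hatop
  · simp [ENNReal.zero_rpow_of_pos, hα]
  have ha : 0 < a.toReal := ENNReal.toReal_pos ha0 hatop
  simp only [← ENNReal.toReal_rpow]
  rw [ENNReal.toReal_div, Real.div_rpow ENNReal.toReal_nonneg ENNReal.toReal_nonneg,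
    ← Real.rpow_add ha, show (-(1 / 2) + (1 - α) / 2 : ℝ) = -(α / 2) by ring,
    Real.rpow_neg ENNReal.toReal_nonneg, ← div_eq_mul_inv]

section

variable {μ : Measure X} {w : X → ℂ} {φ : X → X} {α : ℝ}

lemma aluthgeFun_apply (hα : 0 < α) (f : X → ℂ) {x : X} (hx : wcDeriv μ w φ x ≠ ∞) :
    aluthgeFun μ w φ α f x = wcAlpha μ w φ α x * f (φ x) := by
  simp only [aluthgeFun, wcTilde, wcAlpha,
    ← toReal_rpow_mul_rpow_neg_half_mul_rpow_one_sub hα (a := wcDeriv μ w φ (φ x)) hx]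
  push_cast
  ring

lemma aluthgeFun_ae_eq (hα : 0 < α) (hfin : ∀ᵐ x ∂μ, wcDeriv μ w φ x < ⊤) (f : X → ℂ) :
    aluthgeFun μ w φ α f =ᵐ[μ] fun x => wcAlpha μ w φ α x * f (φ x) := by
  filter_upwards [hfin] with x hx
  exact aluthgeFun_apply hα f hx.ne

end

def truncSet {Y : Type*} (h : Y → ℝ≥0∞) (n : ℕ) : Set Y :=
  {y | h y = 0 ∨ h y ≤ n ∧ (h y)⁻¹ ≤ n}

section

variable {Y : Type*} {h : Y → ℝ≥0∞} {n : ℕ} {y : Y}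

lemma measurableSet_truncSet [MeasurableSpace Y] (hh : Measurable h) (n : ℕ) :
    MeasurableSet (truncSet h n) :=
  hh ((measurableSet_singleton 0).union
    ((measurableSet_Iic).inter (measurableSet_le measurable_inv measurable_const)))

lemma le_of_mem_truncSet (hy : y ∈ truncSet h n) : h y ≤ n := by
  rcases hy with h0 | ⟨hle, -⟩
  · simp [h0]
  · exact hle

lemma eventually_mem_truncSet (hy : h y ≠ ∞) : ∀ᶠ n in atTop, y ∈ truncSet h n := by
  rcases eq_or_ne (h y) 0 with h0 | h0
  · exact Eventually.of_forall fun n => Or.inl h0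
  obtain ⟨k, hk⟩ := ENNReal.exists_nat_gt hy
  obtain ⟨m, hm⟩ := ENNReal.exists_nat_gt (ENNReal.inv_ne_top.2 h0)
  filter_upwards [eventually_ge_atTop k, eventually_ge_atTop m] with n hkn hmn
  exact Or.inr ⟨hk.le.trans (by exact_mod_cast hkn), hm.le.trans (by exact_mod_cast hmn)⟩

lemma toReal_rpow_neg_half_mul_rpow_le_of_mem_truncSet {α : ℝ} (hα : 0 < α)
    (hy : y ∈ truncSet h n) :
    (h y ^ (-(1 / 2) : ℝ)).toReal * (h y ^ ((1 - α) / 2)).toReal ≤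
      ((n : ℝ≥0∞) ^ (α / 2)).toReal := by
  have e := toReal_rpow_mul_rpow_neg_half_mul_rpow_one_sub hα (a := h y) one_ne_top
  rw [ENNReal.one_rpow, ENNReal.toReal_one, one_mul, one_div (h y)] at e
  rw [e]
  rcases hy with h0 | ⟨-, hinv⟩
  · simp [h0, ENNReal.top_rpow_of_pos, hα]
  · exact ENNReal.toReal_mono (rpow_ne_top_of_nonneg (by linarith) (natCast_ne_top n))
      (rpow_le_rpow hinv (by linarith))

end

lemma tendsto_eLpNorm_indicator_compl {E : Type*} [NormedAddCommGroup E] {μ : Measure X}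
    {p : ℝ≥0∞} (hp : p ≠ ∞) {g : X → E} (hg : MemLp g p μ) {S : ℕ → Set X}
    (hS : ∀ n, MeasurableSet (S n)) (hlim : ∀ᵐ x ∂μ, ∀ᶠ n in atTop, x ∈ S n) :
    Tendsto (fun n => eLpNorm ((S n)ᶜ.indicator g) p μ) atTop (𝓝 0) := by
  rcases eq_or_ne p 0 with rfl | hp0
  · simp
  have hp_pos : 0 < p.toReal := ENNReal.toReal_pos hp0 hp
  have hint : Tendsto (fun n => ∫⁻ x, ‖(S n)ᶜ.indicator g x‖ₑ ^ p.toReal ∂μ) atTop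
      (𝓝 (∫⁻ _, 0 ∂μ)) := by
    refine tendsto_lintegral_of_dominated_convergence' (fun x => ‖g x‖ₑ ^ p.toReal)
      (fun n => (hg.1.indicator (hS n).compl).enorm.pow_const _)
      (fun n => Eventually.of_forall fun x => ?_)
      (lintegral_rpow_enorm_lt_top_of_eLpNorm_lt_top hp0 hp hg.2).ne ?_
    · exact ENNReal.rpow_le_rpow (enorm_indicator_le_enorm_self _ _) hp_pos.le
    · filter_upwards [hlim] with x hx
      refine tendsto_const_nhds.congr' (hx.mono fun n hn => ?_)
      simp [Set.indicator_of_notMem (Set.notMem_compl_iff.2 hn), hp_pos]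
  rw [lintegral_zero] at hint
  simp_rw [eLpNorm_eq_lintegral_rpow_enorm_toReal hp0 hp]
  have hroot := (ENNReal.continuous_rpow_const (y := 1 / p.toReal)).tendsto 0
  rw [ENNReal.zero_rpow_of_pos (by positivity)] at hroot
  exact hroot.comp hint

lemma memLp_toReal_rpow_mul_indicator_truncSet {μ : Measure X} {p : ℝ≥0∞} {f : X → ℂ}
    (hf : MemLp f p μ) {h : X → ℝ≥0∞} (hh : Measurable h) {s : ℝ} (hs : 0 ≤ s) (n : ℕ) :
    MemLp (fun x => ((h x ^ s).toReal : ℂ) * (truncSet h n).indicator f x) p μ := by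
  have hS := measurableSet_truncSet hh n
  have hc : Measurable fun x => ((h x ^ s).toReal : ℂ) := by fun_prop
  refine (hf.indicator hS).of_le_mul (c := ((n : ℝ≥0∞) ^ s).toReal)
    (hc.aestronglyMeasurable.mul (hf.1.indicator hS)) (ae_of_all _ fun x => ?_)
  rw [norm_mul, Complex.norm_real, Real.norm_of_nonneg ENNReal.toReal_nonneg]
  by_cases hx : x ∈ truncSet h n
  · exact mul_le_mul_of_nonneg_right (ENNReal.toReal_mono
      (rpow_ne_top_of_nonneg hs (natCast_ne_top n)) (rpow_le_rpow (le_of_mem_truncSet hx) hs))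
      (norm_nonneg _)
  · simp [hx]

section

variable {μ : Measure X} [SigmaFinite μ] {w : X → ℂ} {φ : X → X} {α : ℝ} {f : X → ℂ}

lemma memLp_mul_indicator_truncSet_comp (hw : Measurable w) (hφ : Measurable φ)
    (habs : (wcMeasure μ w).map φ ≪ μ) (hf : MemLp f 2 μ) (hfm : Measurable f) (n : ℕ) :
    MemLp (fun x => w x * (truncSet (wcDeriv μ w φ) n).indicator f (φ x)) 2 μ := by
  set F := (truncSet (wcDeriv μ w φ) n).indicator f
  have hFm : Measurable F := hfm.indicator (measurableSet_truncSet measurable_wcDeriv n)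
  rw [memLp_two_iff_lintegral_enorm_sq_lt_top (by fun_prop),
    lintegral_enorm_mul_comp_sq hw hφ habs hFm]
  calc ∫⁻ x, wcDeriv μ w φ x * ‖F x‖ₑ ^ 2 ∂μ ≤ ∫⁻ x, n * ‖f x‖ₑ ^ 2 ∂μ := by
        refine lintegral_mono fun x => ?_
        by_cases hx : x ∈ truncSet (wcDeriv μ w φ) n
        · simp only [F, Set.indicator_of_mem hx]
          exact mul_le_mul_left (le_of_mem_truncSet hx) _
        · simp [F, hx]
    _ = n * ∫⁻ x, ‖f x‖ₑ ^ 2 ∂μ := lintegral_const_mul _ (by fun_prop)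
    _ < ∞ := mul_lt_top (natCast_lt_top n)
        ((memLp_two_iff_lintegral_enorm_sq_lt_top hf.1).1 hf)

lemma memLp_wcTilde_mul_indicator_truncSet_comp (hw : Measurable w) (hφ : Measurable φ)
    (habs : (wcMeasure μ w).map φ ≪ μ) (hα : 0 < α) (hf : MemLp f 2 μ) (hfm : Measurable f)
    (n : ℕ) :
    MemLp (fun x => wcTilde μ w φ x * ((wcDeriv μ w φ (φ x) ^ ((1 - α) / 2)).toReal : ℂ) *
      (truncSet (wcDeriv μ w φ) n).indicator f (φ x)) 2 μ := by
  have hh := measurable_wcDeriv (μ := μ) (w := w) (φ := φ)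
  have hFm := hfm.indicator (measurableSet_truncSet hh n)
  have := measurable_wcTilde (μ := μ) hw hφ
  refine (memLp_mul_indicator_truncSet_comp hw hφ habs hf hfm n).of_le_mul
    (c := ((n : ℝ≥0∞) ^ (α / 2)).toReal) (by fun_prop) (ae_of_all _ fun x => ?_)
  by_cases hx : φ x ∈ truncSet (wcDeriv μ w φ) n
  · have hbound := toReal_rpow_neg_half_mul_rpow_le_of_mem_truncSet hα hx
    simp only [wcTilde, norm_mul, Complex.norm_real,
      Real.norm_of_nonneg ENNReal.toReal_nonneg]
    calc _ = (wcDeriv μ w φ (φ x) ^ (-(1 / 2) : ℝ)).toReal *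
          (wcDeriv μ w φ (φ x) ^ ((1 - α) / 2)).toReal *
          (‖w x‖ * ‖(truncSet (wcDeriv μ w φ) n).indicator f (φ x)‖) := by ring
      _ ≤ _ := by gcongr
  · simp [hx]

lemma aluthgeDom_indicator_truncSet (hw : Measurable w) (hφ : Measurable φ)
    (habs : (wcMeasure μ w).map φ ≪ μ) (hfin : ∀ᵐ x ∂μ, wcDeriv μ w φ x < ⊤)
    (hα : α ∈ Set.Ioc (0 : ℝ) 1) (hf : MemLp f 2 μ) (hfm : Measurable f)
    (hfα : MemLp (fun x => wcAlpha μ w φ α x * f (φ x)) 2 μ) (n : ℕ) :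
    aluthgeDom μ w φ α ((truncSet (wcDeriv μ w φ) n).indicator f) := by
  have hh := measurable_wcDeriv (μ := μ) (w := w) (φ := φ)
  have hS := measurableSet_truncSet hh n
  refine ⟨hf.indicator hS, memLp_toReal_rpow_mul_indicator_truncSet hf hh (by linarith [hα.2]) n,
    memLp_wcTilde_mul_indicator_truncSet_comp hw hφ habs hα.1 hf hfm n, ?_⟩
  have := measurable_wcAlpha (μ := μ) hw hφ α
  have := hfm.indicator hS
  refine (hfα.of_le (by fun_prop) (ae_of_all _ fun x => ?_)).ae_eq
    (aluthgeFun_ae_eq hα.1 hfin _).symm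
  simp only [norm_mul]
  gcongr
  exact norm_indicator_le_norm_self f (φ x)

theorem exists_aluthgeDom_tendsto (hw : Measurable w) (hφ : Measurable φ)
    (habs : (wcMeasure μ w).map φ ≪ μ) (hfin : ∀ᵐ x ∂μ, wcDeriv μ w φ x < ⊤)
    (hα : α ∈ Set.Ioc (0 : ℝ) 1) (hf : MemLp f 2 μ)
    (hfα : MemLp (fun x => wcAlpha μ w φ α x * f (φ x)) 2 μ) :
    ∃ F : ℕ → X → ℂ, (∀ n, aluthgeDom μ w φ α (F n)) ∧
      Tendsto (fun n => eLpNorm (fun x => F n x - f x) 2 μ) atTop (𝓝 0) ∧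
      Tendsto (fun n => eLpNorm
        (fun x => wcAlpha μ w φ α x * F n (φ x) - wcAlpha μ w φ α x * f (φ x)) 2 μ)
        atTop (𝓝 0) := by
  set g := hf.1.mk f
  have hfg : f =ᵐ[μ] g := hf.1.ae_eq_mk
  have hfg_comp : ∀ᵐ x ∂μ, w x ≠ 0 → f (φ x) = g (φ x) :=
    ae_imp_comp_of_ne_zero hw hφ habs hfg
  have hgα : (fun x => wcAlpha μ w φ α x * f (φ x)) =ᵐ[μ]
      fun x => wcAlpha μ w φ α x * g (φ x) := by
    filter_upwards [hfg_comp] with x hx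
    by_cases hwx : w x = 0
    · simp [wcAlpha, hwx]
    · rw [hx hwx]
  set S := truncSet (wcDeriv μ w φ)
  have hS : ∀ n, MeasurableSet (S n) := measurableSet_truncSet measurable_wcDeriv
  have hSlim : ∀ᵐ y ∂μ, ∀ᶠ n in atTop, y ∈ S n :=
    hfin.mono fun y hy => eventually_mem_truncSet hy.ne
  refine ⟨fun n => (S n).indicator g, fun n => aluthgeDom_indicator_truncSet hw hφ habs hfin hα
    (hf.ae_eq hfg) hf.1.stronglyMeasurable_mk.measurable (hfα.ae_eq hgα) n, ?_, ?_⟩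
  · refine (tendsto_eLpNorm_indicator_compl ofNat_ne_top (hf.ae_eq hfg) hS hSlim).congr
      fun n => eLpNorm_congr_norm_ae ?_
    filter_upwards [hfg] with x hx
    by_cases hxS : x ∈ S n <;> simp [hx, hxS]
  · set T : ℕ → Set X := fun n => {x | w x = 0 ∨ φ x ∈ S n}
    have hT : ∀ n, MeasurableSet (T n) := fun n =>
      (hw (measurableSet_singleton 0)).union (hφ (hS n))
    have hTlim : ∀ᵐ x ∂μ, ∀ᶠ n in atTop, x ∈ T n := by
      filter_upwards [ae_imp_comp_of_ne_zero hw hφ habs hSlim] with x hx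
      by_cases hwx : w x = 0
      · exact Eventually.of_forall fun n => Or.inl hwx
      · exact (hx hwx).mono fun n => Or.inr
    refine (tendsto_eLpNorm_indicator_compl ofNat_ne_top (hfα.ae_eq hgα) hT hTlim).congr
      fun n => eLpNorm_congr_norm_ae ?_
    filter_upwards [hfg_comp] with x hx
    by_cases hwx : w x = 0
    · simp [T, wcAlpha, hwx]
    · by_cases hxS : φ x ∈ S n <;> simp [T, hwx, hxS, hx hwx]

end

/-- Closability of `Δ_α(C_{φ,w})` with closure `C_{φ,w_α}` is expressed by the second conjunct:
every `f` in the domain of the closed operator `C_{φ,w_α}` is a graph-norm limit of elements of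
the domain of `Δ_α(C_{φ,w})`. -/
theorem aluthge_wco_transform_closure
    (μ : Measure X) [SigmaFinite μ] (w : X → ℂ) (φ : X → X)
    (hw : Measurable w) (hφ : Measurable φ)
    (habs : (wcMeasure μ w).map φ ≪ μ)
    (hfin : ∀ᵐ x ∂μ, wcDeriv μ w φ x < ⊤)
    (α : ℝ) (hα : α ∈ Set.Ioc (0 : ℝ) 1) :
    (∀ f : X → ℂ, aluthgeDom μ w φ α f →
      (MemLp f 2 μ ∧ MemLp (fun x => wcAlpha μ w φ α x * f (φ x)) 2 μ) ∧
        aluthgeFun μ w φ α f =ᵐ[μ] fun x => wcAlpha μ w φ α x * f (φ x)) ∧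
    (∀ f : X → ℂ, MemLp f 2 μ → MemLp (fun x => wcAlpha μ w φ α x * f (φ x)) 2 μ →
      ∃ F : ℕ → X → ℂ, (∀ n, aluthgeDom μ w φ α (F n)) ∧
        Tendsto (fun n => eLpNorm (fun x => F n x - f x) 2 μ) atTop (𝓝 0) ∧
        Tendsto (fun n => eLpNorm
          (fun x => wcAlpha μ w φ α x * F n (φ x) - wcAlpha μ w φ α x * f (φ x)) 2 μ)
          atTop (𝓝 0)) := by
  refine ⟨fun f hf => ?_, fun f hf hfα => exists_aluthgeDom_tendsto hw hφ habs hfin hα hf hfα⟩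
  have heq := aluthgeFun_ae_eq hα.1 hfin f
  exact ⟨⟨hf.1, hf.2.2.2.ae_eq heq⟩, heq⟩
end

section
/- Assume the standing hypotheses. The formula $Pf = w\cdot \mathsf{E}_{\phi,w}(f_w)$, where $f_w = \chi_{\{w\neq0\}}\,f/w$, defines an orthogonal projection $P$ on $L^2(\mu)$ (i.e., $P$ is bounded, $P^2=P$, and $P^*=P$). -/
open MeasureTheory ENNReal NNReal Filter Topology

variable {X : Type*} [MeasurableSpace X]

/-!
With `μ_w = |w|² μ`, the map `g ↦ w g` is an isometry `L²(μ_w) → L²(μ)`, `f ↦ f_w` is a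
contraction back, `w f_w = f` on `{w ≠ 0}` and `(w g)_w = g` `μ_w`-a.e. Since `h_{φ,w} < ∞`,
`μ_w ∘ φ⁻¹` is σ-finite, hence so is `μ_w` on `φ⁻¹(𝒜)`, and every version of `E_{φ,w}` of an
`L²(μ_w)` function agrees a.e. with `condExpL2`, the orthogonal projection onto the
`φ⁻¹(𝒜)`-measurable subspace. Thus `P` is bounded, idempotent because `E_{φ,w}` fixes
`φ⁻¹(𝒜)`-measurable functions, and self-adjoint because `condExpL2` is.
-/

namespace MeasureTheory

variable {α 𝕜 : Type*} [RCLike 𝕜] {m m0 : MeasurableSpace α} {ν : Measure α}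

theorem indicator_ae_eq_condExpL2_of_forall_setIntegral_eq (hm : m ≤ m0)
    [SigmaFinite (ν.trim hm)] (F : Lp 𝕜 2 ν) {g : α → 𝕜} (hg : StronglyMeasurable[m] g)
    (hgF : ∀ s, MeasurableSet[m] s → ν s < ∞ → ∫ x in s, g x ∂ν = ∫ x in s, F x ∂ν)
    {B : Set α} (hB : MeasurableSet[m] B) {C : ℝ≥0} (hgC : ∀ x ∈ B, ‖g x‖ ≤ C) :
    B.indicator g =ᵐ[ν] B.indicator (condExpL2 𝕜 𝕜 hm F : α → 𝕜) := by
  have hB0 : MeasurableSet B := hm B hB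
  obtain ⟨c, hcm, hc⟩ := aestronglyMeasurable_condExpL2 (𝕜 := 𝕜) hm F
  refine ae_eq_of_forall_setIntegral_eq_of_sigmaFinite' hm (fun s _ hνs => ?_)
    (fun s _ hνs => ?_) (fun s hs hνs => ?_) (hg.indicator hB).aestronglyMeasurable
    ⟨B.indicator c, hcm.indicator hB, hc.mono fun x hx => by simp only [Set.indicator, hx]⟩
  · refine Measure.integrableOn_of_bounded (M := C) hνs.ne
      ((hg.mono hm).indicator hB0).aestronglyMeasurable (ae_of_all _ fun x => ?_)
    by_cases hx : x ∈ B
    · simpa [hx] using hgC x hx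
    · simp [hx]
  · exact (integrableOn_Lp_of_measure_ne_top _ one_le_two hνs.ne).indicator hB0
  · have hsB : ν (s ∩ B) < ∞ := (measure_mono Set.inter_subset_left).trans_lt hνs
    rw [setIntegral_indicator hB0, setIntegral_indicator hB0, hgF _ (hs.inter hB) hsB,
      integral_condExpL2_eq_of_fin_meas_real F (hs.inter hB) hsB.ne]

theorem ae_eq_condExpL2_of_forall_setIntegral_eq (hm : m ≤ m0)
    [SigmaFinite (ν.trim hm)] (F : Lp 𝕜 2 ν) {g : α → 𝕜} (hg : StronglyMeasurable[m] g)
    (hgF : ∀ s, MeasurableSet[m] s → ν s < ∞ → ∫ x in s, g x ∂ν = ∫ x in s, F x ∂ν) :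
    g =ᵐ[ν] (condExpL2 𝕜 𝕜 hm F : α → 𝕜) := by
  -- `g` need not be integrable on sets of finite measure, but its truncations are.
  have hB (n : ℕ) : MeasurableSet[m] {x | ‖g x‖₊ ≤ n} := hg.nnnorm.measurable measurableSet_Iic
  have htrunc := ae_all_iff.mpr fun n : ℕ =>
    indicator_ae_eq_condExpL2_of_forall_setIntegral_eq hm F hg hgF (hB n) fun _ hx => hx
  filter_upwards [htrunc] with x hx
  obtain ⟨n, hn⟩ := exists_nat_ge ‖g x‖₊
  simpa [Set.indicator_of_mem (show x ∈ {x | ‖g x‖₊ ≤ n} from hn)] using hx n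

theorem sigmaFinite_trim_comap {β : Type*} [MeasurableSpace β] {φ : α → β} (hφ : Measurable φ)
    [SigmaFinite (ν.map φ)] : SigmaFinite (ν.trim hφ.comap_le) := by
  refine SigmaFinite.of_map _ (Measurable.aemeasurable (f := φ) (comap_measurable φ)) ?_
  rw [map_trim_comap hφ]
  infer_instance

theorem integral_mul_conj_eq_inner (F G : Lp ℂ 2 ν) :
    ∫ x, F x * starRingEnd ℂ (G x) ∂ν = inner ℂ G F := by
  rw [L2.inner_def]
  simp

end MeasureTheory

section CondExp

variable {φ : X → X} {ν : Measure X} {f E : X → ℂ}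

theorem IsCondExpC.setIntegral_eq (hE : IsCondExpC φ ν f E) {s : Set X}
    (hs : MeasurableSet[MeasurableSpace.comap φ inferInstance] s) (hνs : ν s < ∞) :
    ∫ x in s, E x ∂ν = ∫ x in s, f x ∂ν := by
  obtain ⟨t, ht, rfl⟩ := hs
  exact hE.2 t ht hνs

theorem isCondExpC_of_ae_eq (hE : Measurable[MeasurableSpace.comap φ inferInstance] E)
    (hfE : f =ᵐ[ν] E) : IsCondExpC φ ν f E :=
  ⟨hE, fun _ _ _ => integral_congr_ae (ae_restrict_of_ae hfE.symm)⟩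

theorem IsCondExpC.ae_eq_condExpL2 (hφ : Measurable φ) [SigmaFinite (ν.trim hφ.comap_le)]
    (hE : IsCondExpC φ ν f E) (hf : MemLp f 2 ν) :
    E =ᵐ[ν] (condExpL2 ℂ ℂ hφ.comap_le (hf.toLp f) : X → ℂ) :=
  ae_eq_condExpL2_of_forall_setIntegral_eq _ _ hE.1.stronglyMeasurable fun _ hs hνs =>
    (hE.setIntegral_eq hs hνs).trans
      (integral_congr_ae (ae_restrict_of_ae hf.coeFn_toLp.symm))

theorem IsCondExpC.memLp (hφ : Measurable φ) [SigmaFinite (ν.trim hφ.comap_le)]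
    (hE : IsCondExpC φ ν f E) (hf : MemLp f 2 ν) : MemLp E 2 ν :=
  (Lp.memLp _).ae_eq (hE.ae_eq_condExpL2 hφ hf).symm

theorem IsCondExpC.eLpNorm_le (hφ : Measurable φ) [SigmaFinite (ν.trim hφ.comap_le)]
    (hE : IsCondExpC φ ν f E) (hf : MemLp f 2 ν) :
    eLpNorm E 2 ν ≤ eLpNorm f 2 ν := by
  rw [eLpNorm_congr_ae (hE.ae_eq_condExpL2 hφ hf), ← eLpNorm_congr_ae hf.coeFn_toLp]
  exact eLpNorm_condExpL2_le _ _

theorem IsCondExpC.ae_eq (hφ : Measurable φ) [SigmaFinite (ν.trim hφ.comap_le)]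
    {E' : X → ℂ} (hE : IsCondExpC φ ν f E) (hE' : IsCondExpC φ ν f E')
    (hf : MemLp f 2 ν) : E =ᵐ[ν] E' :=
  (hE.ae_eq_condExpL2 hφ hf).trans (hE'.ae_eq_condExpL2 hφ hf).symm

theorem IsCondExpC.integral_mul_conj_eq (hφ : Measurable φ)
    [SigmaFinite (ν.trim hφ.comap_le)] {g G : X → ℂ} (hE : IsCondExpC φ ν f E)
    (hG : IsCondExpC φ ν g G) (hf : MemLp f 2 ν) (hg : MemLp g 2 ν) :
    ∫ x, E x * starRingEnd ℂ (g x) ∂ν = ∫ x, f x * starRingEnd ℂ (G x) ∂ν := by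
  calc ∫ x, E x * starRingEnd ℂ (g x) ∂ν
      = ∫ x, (condExpL2 ℂ ℂ hφ.comap_le (hf.toLp f) : X → ℂ) x
          * starRingEnd ℂ (hg.toLp g x) ∂ν :=
        integral_congr_ae <| by
          filter_upwards [hE.ae_eq_condExpL2 hφ hf, hg.coeFn_toLp] with x hEx hgx
          rw [hEx, hgx]
    _ = inner ℂ (hg.toLp g) (condExpL2 ℂ ℂ hφ.comap_le (hf.toLp f) : Lp ℂ 2 ν) :=
        integral_mul_conj_eq_inner _ _
    _ = inner ℂ (condExpL2 ℂ ℂ hφ.comap_le (hg.toLp g) : Lp ℂ 2 ν) (hf.toLp f) :=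
        (inner_condExpL2_left_eq_right _).symm
    _ = ∫ x, hf.toLp f x * starRingEnd ℂ
          ((condExpL2 ℂ ℂ hφ.comap_le (hg.toLp g) : X → ℂ) x) ∂ν :=
        (integral_mul_conj_eq_inner _ _).symm
    _ = ∫ x, f x * starRingEnd ℂ (G x) ∂ν :=
        integral_congr_ae <| by
          filter_upwards [hG.ae_eq_condExpL2 hφ hg, hf.coeFn_toLp] with x hGx hfx
          rw [hGx, hfx]

end CondExp

section WeightedMeasure

variable {μ : Measure X} {w : X → ℂ} {φ : X → X}

theorem sigmaFinite_map_wcMeasure [SigmaFinite μ] (habs : (wcMeasure μ w).map φ ≪ μ)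
    (hfin : ∀ᵐ x ∂μ, wcDeriv μ w φ x < ⊤) : SigmaFinite ((wcMeasure μ w).map φ) := by
  have : SFinite (wcMeasure μ w) := by unfold wcMeasure; infer_instance
  rw [← Measure.withDensity_rnDeriv_eq _ _ habs]
  exact SigmaFinite.withDensity_of_ne_top (hfin.mono fun _ hx => hx.ne)

theorem integral_wcMeasure (hw : Measurable w) (g : X → ℂ) :
    ∫ x, g x ∂wcMeasure μ w = ∫ x, (‖w x‖ ^ 2 : ℂ) * g x ∂μ := by
  have hdens : wcMeasure μ w = μ.withDensity fun x => ((‖w x‖₊ ^ 2 : ℝ≥0) : ℝ≥0∞) := by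
    simp [wcMeasure]
  rw [hdens, integral_withDensity_eq_integral_smul (hw.nnnorm.pow_const 2)]
  simp [NNReal.smul_def]

theorem sq_norm_mul_conj_fw {Y : Type*} (w f : Y → ℂ) (x : Y) :
    (‖w x‖ ^ 2 : ℂ) * starRingEnd ℂ (fw w f x) = w x * starRingEnd ℂ (f x) := by
  by_cases hx : w x = 0
  · simp [fw, hx]
  · rw [fw, if_neg hx, map_div₀, ← Complex.mul_conj', mul_assoc, mul_div_cancel₀]
    simpa using hx

theorem eLpNorm_mul_eq_eLpNorm_wcMeasure (hw : Measurable w) (g : X → ℂ) :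
    eLpNorm (fun x => w x * g x) 2 μ = eLpNorm g 2 (wcMeasure μ w) := by
  simp only [eLpNorm_eq_lintegral_rpow_enorm_toReal two_ne_zero ofNat_ne_top, wcMeasure]
  rw [lintegral_withDensity_eq_lintegral_mul_non_measurable _ (by fun_prop)
    (ae_of_all _ fun _ => pow_lt_top coe_lt_top)]
  simp [mul_pow, enorm_eq_nnnorm]

theorem ae_ne_zero_wcMeasure (hw : Measurable w) : ∀ᵐ x ∂wcMeasure μ w, w x ≠ 0 := by
  rw [wcMeasure, ae_withDensity_iff (by fun_prop)]
  exact ae_of_all _ fun x hx => by simpa using hx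

theorem mul_ae_eq_of_ae_eq_wcMeasure (hw : Measurable w) {g₁ g₂ : X → ℂ}
    (h : g₁ =ᵐ[wcMeasure μ w] g₂) : (fun x => w x * g₁ x) =ᵐ[μ] fun x => w x * g₂ x := by
  rw [EventuallyEq, wcMeasure, ae_withDensity_iff (by fun_prop)] at h
  filter_upwards [h] with x hx
  by_cases hwx : w x = 0
  · simp [hwx]
  · rw [hx (by simpa using hwx)]

theorem fw_mul_ae_eq (hw : Measurable w) (g : X → ℂ) :
    fw w (fun x => w x * g x) =ᵐ[wcMeasure μ w] g := by
  filter_upwards [ae_ne_zero_wcMeasure hw] with x hx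
  rw [fw, if_neg hx, mul_div_cancel_left₀ _ hx]

theorem eLpNorm_fw_le (hw : Measurable w) (f : X → ℂ) :
    eLpNorm (fw w f) 2 (wcMeasure μ w) ≤ eLpNorm f 2 μ := by
  rw [← eLpNorm_mul_eq_eLpNorm_wcMeasure hw]
  refine eLpNorm_mono fun x => ?_
  by_cases hx : w x = 0
  · simp [fw, hx]
  · rw [fw, if_neg hx, mul_div_cancel₀ _ hx]

theorem memLp_fw (hw : Measurable w) {f : X → ℂ} (hf : MemLp f 2 μ) :
    MemLp (fw w f) 2 (wcMeasure μ w) := by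
  refine ⟨?_, (eLpNorm_fw_le hw f).trans_lt hf.2⟩
  -- `x / 0 = 0` makes `fw w f` the plain quotient.
  have hdiv : fw w f = fun x => f x / w x := by
    ext x
    by_cases hx : w x = 0 <;> simp [fw, hx]
  rw [hdiv]
  exact ((hf.1.aemeasurable.div hw.aemeasurable).aestronglyMeasurable).mono_ac
    (withDensity_absolutelyContinuous _ _)

theorem memLp_mul_of_memLp_wcMeasure (hw : Measurable w) {g : X → ℂ} (hgm : Measurable g)
    (hg : MemLp g 2 (wcMeasure μ w)) : MemLp (fun x => w x * g x) 2 μ :=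
  ⟨(hw.mul hgm).aestronglyMeasurable, by rw [eLpNorm_mul_eq_eLpNorm_wcMeasure hw]; exact hg.2⟩

theorem integral_mul_conj_eq_integral_fw (hw : Measurable w) (a b : X → ℂ) :
    ∫ x, w x * a x * starRingEnd ℂ (b x) ∂μ
      = ∫ x, a x * starRingEnd ℂ (fw w b x) ∂wcMeasure μ w := by
  rw [integral_wcMeasure hw]
  congr 1 with x
  linear_combination a x * (sq_norm_mul_conj_fw w b x).symm

theorem integral_mul_conj_mul_eq_integral_fw (hw : Measurable w) (a b : X → ℂ) :
    ∫ x, a x * starRingEnd ℂ (w x * b x) ∂μ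
      = ∫ x, fw w a x * starRingEnd ℂ (b x) ∂wcMeasure μ w := by
  have h := congrArg (starRingEnd ℂ) (integral_mul_conj_eq_integral_fw (μ := μ) hw b a)
  rw [← integral_conj, ← integral_conj] at h
  simpa [mul_comm] using h

end WeightedMeasure

/-- `P f = w · E_{φ,w}(f_w)` defines an orthogonal projection on
`L²(μ)`: it maps `L²(μ)` boundedly into itself, is idempotent, and is self-adjoint. -/
theorem aluthge_wco_projection
    (μ : Measure X) [SigmaFinite μ] (w : X → ℂ) (φ : X → X)
    (hw : Measurable w) (hφ : Measurable φ)
    (habs : (wcMeasure μ w).map φ ≪ μ)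
    (hfin : ∀ᵐ x ∂μ, wcDeriv μ w φ x < ⊤)
    (E : (X → ℂ) → X → ℂ)
    (hE : ∀ f : X → ℂ, MemLp f 2 μ → IsCondExpC φ (wcMeasure μ w) (fw w f) (E f))
    (P : (X → ℂ) → X → ℂ)
    (hP : ∀ f : X → ℂ, P f = fun x => w x * E f x) :
    (∀ f : X → ℂ, MemLp f 2 μ → MemLp (P f) 2 μ) ∧
    (∃ C : ℝ≥0, ∀ f : X → ℂ, MemLp f 2 μ →
      eLpNorm (P f) 2 μ ≤ (C : ℝ≥0∞) * eLpNorm f 2 μ) ∧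
    (∀ f : X → ℂ, MemLp f 2 μ → P (P f) =ᵐ[μ] P f) ∧
    (∀ f g : X → ℂ, MemLp f 2 μ → MemLp g 2 μ →
      ∫ x, P f x * (starRingEnd ℂ) (g x) ∂μ = ∫ x, f x * (starRingEnd ℂ) (P g x) ∂μ) := by
  have := sigmaFinite_map_wcMeasure habs hfin
  have := sigmaFinite_trim_comap (ν := wcMeasure μ w) hφ
  have hPmem (f : X → ℂ) (hf : MemLp f 2 μ) : MemLp (P f) 2 μ :=
    hP f ▸ memLp_mul_of_memLp_wcMeasure hw ((hE f hf).1.mono hφ.comap_le le_rfl)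
      ((hE f hf).memLp hφ (memLp_fw hw hf))
  refine ⟨hPmem, ⟨1, fun f hf => ?_⟩, fun f hf => ?_, fun f g hf hg => ?_⟩
  · rw [hP, eLpNorm_mul_eq_eLpNorm_wcMeasure hw, ENNReal.coe_one, one_mul]
    exact ((hE f hf).eLpNorm_le hφ (memLp_fw hw hf)).trans (eLpNorm_fw_le hw f)
  · have hEf : IsCondExpC φ (wcMeasure μ w) (fw w (P f)) (E f) :=
      isCondExpC_of_ae_eq (hE f hf).1 (hP f ▸ fw_mul_ae_eq hw (E f))
    rw [hP (P f)]
    exact (mul_ae_eq_of_ae_eq_wcMeasure hw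
      ((hE _ (hPmem f hf)).ae_eq hφ hEf (memLp_fw hw (hPmem f hf)))).trans
      (hP f).symm.eventuallyEq
  · calc ∫ x, P f x * starRingEnd ℂ (g x) ∂μ
        = ∫ x, E f x * starRingEnd ℂ (fw w g x) ∂wcMeasure μ w := by
          simp only [hP, integral_mul_conj_eq_integral_fw hw]
      _ = ∫ x, fw w f x * starRingEnd ℂ (E g x) ∂wcMeasure μ w :=
          (hE f hf).integral_mul_conj_eq hφ (hE g hg) (memLp_fw hw hf) (memLp_fw hw hg)
      _ = ∫ x, f x * starRingEnd ℂ (P g x) ∂μ := by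
          simp only [hP, integral_mul_conj_mul_eq_integral_fw hw]
end
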